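/- For every fixed k ≥ 2, the ordinary generating functions f_k(x) = Σ_{n≥0} D(n,k)x^n satisfy the recursion f_k(x) = (x^2/(1−kx)) · d/dx (x·f_{k−1}(x)), with f_1(x) = x^2/(1−x), as identities of formal power series. -/

import Mathlib

noncomputable def partD (n k : ℕ) : ℕ :=
  Nat.card {P : Finpartition (Finset.univ : Finset (Fin n)) //
    P.parts.card = k ∧ ∀ b ∈ P.parts, 2 ≤ b.card}

/-- The ordinary generating function of `partD · k` as a formal power series. -/
noncomputable def partDogf (k : ℕ) : PowerSeries ℚ :=
  PowerSeries.mk fun n => (partD n k : ℚ)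

/-!
Take a partition of `insert a s` (with `a ∉ s`) into `k + 1` blocks of size at least two, and
remove `a`. If the block of `a` had at least three elements, what is left is a partition of `s`
into `k + 1` such blocks together with a marked block (the one `a` came from); otherwise the block
of `a` was a pair `{a, j}` with `j ∈ s`, and deleting it leaves a partition of `s \ {j}` into `k`
blocks. This recursion shows that the number of such partitions depends only on `#s`, and it
becomes `D(n + 2, k + 1) = (k + 1) D(n + 1, k + 1) + (n + 1) D(n, k)`. Together with
`D(n, 0) = [n = 0]`, that is the coefficientwise form of `(1 - (k + 1) x) f_{k+1} = x² (x f_k)'`.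
-/

open Finset

namespace Finset

variable {α : Type*} [DecidableEq α] {s b : Finset α} {a : α}

theorem insert_sdiff_union_erase (ha : a ∉ s) (hb : b ⊆ insert a s) (hab : a ∈ b) :
    insert a s \ b ∪ b.erase a = s := by
  ext x
  have := @hb x
  simp only [mem_union, mem_sdiff, mem_insert, mem_erase] at this ⊢
  grind

theorem insert_sdiff_pair (ha : a ∉ s) (j : α) : insert a s \ {a, j} = s.erase j := by
  ext x
  simp only [mem_sdiff, mem_insert, mem_singleton, mem_erase]
  grind

theorem card_eq_two_iff_exists_eq_pair (ha : a ∉ s) (hb : b ⊆ insert a s) (hab : a ∈ b) :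
    #b = 2 ↔ ∃ j ∈ s, b = {a, j} := by
  constructor
  · intro h
    obtain ⟨j, hj⟩ := card_eq_one.1 (by rw [card_erase_of_mem hab, h] : #(b.erase a) = 1)
    have hjb : j ∈ b.erase a := hj ▸ mem_singleton_self j
    refine ⟨j, ?_, by rw [← insert_erase hab, hj]⟩
    exact (mem_insert.1 (hb (mem_of_mem_erase hjb))).resolve_left (ne_of_mem_erase hjb)
  · rintro ⟨j, hj, rfl⟩
    exact card_pair (hj.ne_of_notMem ha).symm

end Finset

namespace Finpartition

variable {α : Type*} [DecidableEq α] {s t b b' : Finset α} {a j : α}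

section ReplacePart

theorem sup_erase_parts (P : Finpartition s) (hb : b ∈ P.parts) :
    (P.parts.erase b).sup id = s \ b := by
  ext x
  simp only [mem_sup, mem_erase, id, mem_sdiff]
  constructor
  · rintro ⟨d, ⟨hdb, hd⟩, hx⟩
    exact ⟨P.subset hd hx, fun hxb => hdb (P.eq_of_mem_parts hd hb hx hxb)⟩
  · rintro ⟨hx, hxb⟩
    obtain ⟨d, hd, hxd⟩ := P.exists_mem hx
    exact ⟨d, ⟨fun h => hxb (h ▸ hxd), hd⟩, hxd⟩

def erasePart (P : Finpartition s) (hb : b ∈ P.parts) : Finpartition (s \ b) :=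
  P.ofSubset (erase_subset b P.parts) (P.sup_erase_parts hb)

theorem notMem_erase_parts (P : Finpartition s) (hb : b ∈ P.parts) (hb' : b' ≠ ∅)
    (hdisj : Disjoint (s \ b) b') : b' ∉ P.parts.erase b := fun h =>
  hb' (disjoint_self.1 (hdisj.mono_left ((P.erasePart hb).subset h)))

def replacePart (P : Finpartition s) (hb : b ∈ P.parts) (hb' : b' ≠ ∅)
    (hdisj : Disjoint (s \ b) b') (ht : s \ b ∪ b' = t) : Finpartition t :=
  (P.erasePart hb).extend hb' hdisj ht

variable (P : Finpartition s) (hb : b ∈ P.parts) (hb' : b' ≠ ∅) (hdisj : Disjoint (s \ b) b')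
  (ht : s \ b ∪ b' = t)

@[simp]
theorem replacePart_parts :
    (P.replacePart hb hb' hdisj ht).parts = insert b' (P.parts.erase b) := rfl

theorem mem_replacePart_self : b' ∈ (P.replacePart hb hb' hdisj ht).parts :=
  mem_insert_self _ _

theorem card_replacePart : #(P.replacePart hb hb' hdisj ht).parts = #P.parts := by
  rw [replacePart_parts, card_insert_of_notMem (P.notMem_erase_parts hb hb' hdisj),
    card_erase_add_one hb]

end ReplacePart

section InsertIntoPart

theorem erase_part_ne_empty (P : Finpartition (insert a s)) (h : 2 ≤ #(P.part a)) :
    (P.part a).erase a ≠ ∅ := by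
  rw [← nonempty_iff_ne_empty, ← card_pos,
    card_erase_of_mem (P.mem_part_self.2 (mem_insert_self a s))]
  omega

def eraseFromPart (P : Finpartition (insert a s)) (ha : a ∉ s) (h : 2 ≤ #(P.part a)) : Finpartition s :=
  P.replacePart (P.part_mem.2 (mem_insert_self a s)) (P.erase_part_ne_empty h)
    (disjoint_sdiff_self_left.mono_right (erase_subset a _))
    (insert_sdiff_union_erase ha (P.part_subset a) (P.mem_part_self.2 (mem_insert_self a s)))

def insertIntoPart (Q : Finpartition s) (ha : a ∉ s) (hb : b ∈ Q.parts) : Finpartition (insert a s) :=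
  Q.replacePart hb (insert_ne_empty a b)
    (disjoint_insert_right.2 ⟨fun h => ha (mem_sdiff.1 h).1, disjoint_sdiff_self_left⟩)
    (by rw [union_insert, sdiff_union_of_subset (Q.subset hb)])

@[simp]
theorem eraseFromPart_parts (P : Finpartition (insert a s)) (ha : a ∉ s) (h : 2 ≤ #(P.part a)) :
    (P.eraseFromPart ha h).parts = insert ((P.part a).erase a) (P.parts.erase (P.part a)) :=
  rfl

@[simp]
theorem insertIntoPart_parts (Q : Finpartition s) (ha : a ∉ s) (hb : b ∈ Q.parts) :
    (Q.insertIntoPart ha hb).parts = insert (insert a b) (Q.parts.erase b) :=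
  rfl

theorem card_eraseFromPart (P : Finpartition (insert a s)) (ha : a ∉ s) (h : 2 ≤ #(P.part a)) :
    #(P.eraseFromPart ha h).parts = #P.parts :=
  card_replacePart ..

theorem card_insertIntoPart (Q : Finpartition s) (ha : a ∉ s) (hb : b ∈ Q.parts) :
    #(Q.insertIntoPart ha hb).parts = #Q.parts :=
  card_replacePart ..

theorem part_insertIntoPart (Q : Finpartition s) (ha : a ∉ s) (hb : b ∈ Q.parts) :
    (Q.insertIntoPart ha hb).part a = insert a b :=
  part_eq_of_mem _ (mem_replacePart_self ..) (mem_insert_self a b)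

theorem card_part_insertIntoPart (Q : Finpartition s) (ha : a ∉ s) (hb : b ∈ Q.parts) :
    #((Q.insertIntoPart ha hb).part a) = #b + 1 := by
  rw [part_insertIntoPart, card_insert_of_notMem fun h => ha (Q.subset hb h)]

theorem insertIntoPart_eraseFromPart (P : Finpartition (insert a s)) (ha : a ∉ s)
    (h : 2 ≤ #(P.part a)) (hmem : (P.part a).erase a ∈ (P.eraseFromPart ha h).parts) :
    (P.eraseFromPart ha h).insertIntoPart ha hmem = P := by
  have hpart := P.part_mem.2 (mem_insert_self a s)
  have hnotMem := P.notMem_erase_parts hpart (P.erase_part_ne_empty h)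
    (disjoint_sdiff_self_left.mono_right (erase_subset a _))
  ext1
  rw [insertIntoPart_parts, eraseFromPart_parts, erase_insert hnotMem,
    insert_erase (P.mem_part_self.2 (mem_insert_self a s)), insert_erase hpart]

theorem eraseFromPart_insertIntoPart (Q : Finpartition s) (ha : a ∉ s) (hb : b ∈ Q.parts)
    (h : 2 ≤ #((Q.insertIntoPart ha hb).part a)) :
    (Q.insertIntoPart ha hb).eraseFromPart ha h = Q := by
  have hnotMem : insert a b ∉ Q.parts.erase b := fun h =>
    ha (Q.subset (mem_erase.1 h).2 (mem_insert_self a b))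
  ext1
  rw [eraseFromPart_parts, part_insertIntoPart, insertIntoPart_parts,
    erase_insert fun h => ha (Q.subset hb h), erase_insert hnotMem, insert_erase hb]

end InsertIntoPart

section InsertPairPart

def erasePairPart (P : Finpartition (insert a s)) (ha : a ∉ s) (h : P.part a = {a, j}) :
    Finpartition (s.erase j) :=
  (P.erasePart (P.part_mem.2 (mem_insert_self a s))).copy (by rw [h, insert_sdiff_pair ha])

def insertPairPart (Q : Finpartition (s.erase j)) (ha : a ∉ s) (hj : j ∈ s) :
    Finpartition (insert a s) :=
  Q.extend (b := {a, j}) (insert_ne_empty a _)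
    (by simp [disjoint_insert_right, disjoint_singleton_right, ha])
    (by rw [sup_eq_union, union_comm, insert_union, singleton_union, insert_erase hj])

@[simp]
theorem erasePairPart_parts (P : Finpartition (insert a s)) (ha : a ∉ s)
    (h : P.part a = {a, j}) : (P.erasePairPart ha h).parts = P.parts.erase (P.part a) :=
  rfl

@[simp]
theorem insertPairPart_parts (Q : Finpartition (s.erase j)) (ha : a ∉ s) (hj : j ∈ s) :
    (Q.insertPairPart ha hj).parts = insert {a, j} Q.parts :=
  rfl

theorem part_insertPairPart (Q : Finpartition (s.erase j)) (ha : a ∉ s) (hj : j ∈ s) :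
    (Q.insertPairPart ha hj).part a = {a, j} :=
  part_eq_of_mem _ (mem_insert_self _ _) (mem_insert_self a _)

theorem insertPairPart_erasePairPart (P : Finpartition (insert a s)) (ha : a ∉ s) (hj : j ∈ s)
    (h : P.part a = {a, j}) : (P.erasePairPart ha h).insertPairPart ha hj = P := by
  ext1
  rw [insertPairPart_parts, erasePairPart_parts, ← h,
    insert_erase (P.part_mem.2 (mem_insert_self a s))]

theorem erasePairPart_insertPairPart (Q : Finpartition (s.erase j)) (ha : a ∉ s) (hj : j ∈ s)
    (h : (Q.insertPairPart ha hj).part a = {a, j}) :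
    (Q.insertPairPart ha hj).erasePairPart ha h = Q := by
  have hnotMem : {a, j} ∉ Q.parts := fun h =>
    ha (mem_of_mem_erase (Q.subset h (mem_insert_self a _)))
  ext1
  rw [erasePairPart_parts, part_insertPairPart, insertPairPart_parts, erase_insert hnotMem]

end InsertPairPart

def noSingletons (s : Finset α) (k : ℕ) : Finset (Finpartition s) :=
  {P | #P.parts = k ∧ ∀ b ∈ P.parts, 2 ≤ #b}

theorem mem_noSingletons {P : Finpartition s} {k : ℕ} :
    P ∈ noSingletons s k ↔ #P.parts = k ∧ ∀ b ∈ P.parts, 2 ≤ #b := by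
  simp [noSingletons]

section Count

variable {k : ℕ}

theorem eraseFromPart_mem_noSingletons {P : Finpartition (insert a s)} (ha : a ∉ s)
    (hP : P ∈ noSingletons (insert a s) k) (h : 3 ≤ #(P.part a)) :
    P.eraseFromPart ha (by omega) ∈ noSingletons s k := by
  obtain ⟨hcard, hsize⟩ := mem_noSingletons.1 hP
  refine mem_noSingletons.2 ⟨by rw [card_eraseFromPart, hcard], ?_⟩
  simp only [eraseFromPart_parts, mem_insert, mem_erase]
  rintro c (rfl | ⟨-, hc⟩)
  · rw [card_erase_of_mem (P.mem_part_self.2 (mem_insert_self a s))]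
    omega
  · exact hsize c hc

theorem insertIntoPart_mem_noSingletons {Q : Finpartition s} (ha : a ∉ s)
    (hQ : Q ∈ noSingletons s k) (hb : b ∈ Q.parts) :
    Q.insertIntoPart ha hb ∈ noSingletons (insert a s) k := by
  obtain ⟨hcard, hsize⟩ := mem_noSingletons.1 hQ
  refine mem_noSingletons.2 ⟨by rw [card_insertIntoPart, hcard], ?_⟩
  simp only [insertIntoPart_parts, mem_insert, mem_erase]
  rintro c (rfl | ⟨-, hc⟩)
  · rw [card_insert_of_notMem fun h => ha (Q.subset hb h)]
    exact (hsize b hb).trans (Nat.le_succ _)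
  · exact hsize c hc

theorem erasePairPart_mem_noSingletons {P : Finpartition (insert a s)} (ha : a ∉ s)
    (hP : P ∈ noSingletons (insert a s) (k + 1)) (h : P.part a = {a, j}) :
    P.erasePairPart ha h ∈ noSingletons (s.erase j) k := by
  obtain ⟨hcard, hsize⟩ := mem_noSingletons.1 hP
  refine mem_noSingletons.2 ⟨?_, fun c hc => hsize c (mem_of_mem_erase hc)⟩
  rw [erasePairPart_parts, card_erase_of_mem (P.part_mem.2 (mem_insert_self a s)), hcard,
    Nat.add_sub_cancel]

theorem insertPairPart_mem_noSingletons {Q : Finpartition (s.erase j)} (ha : a ∉ s) (hj : j ∈ s)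
    (hQ : Q ∈ noSingletons (s.erase j) k) :
    Q.insertPairPart ha hj ∈ noSingletons (insert a s) (k + 1) := by
  obtain ⟨hcard, hsize⟩ := mem_noSingletons.1 hQ
  refine mem_noSingletons.2 ⟨by rw [insertPairPart, card_extend, hcard], ?_⟩
  simp only [insertPairPart_parts, mem_insert]
  rintro c (rfl | hc)
  · rw [card_pair (hj.ne_of_notMem ha).symm]
  · exact hsize c hc

theorem card_filter_three_le_card_part (ha : a ∉ s) :
    #{P ∈ noSingletons (insert a s) k | 3 ≤ #(P.part a)} = k * #(noSingletons s k) := by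
  have h2 : ∀ P ∈ {P ∈ noSingletons (insert a s) k | 3 ≤ #(P.part a)}, 2 ≤ #(P.part a) :=
    fun P hP => by have := (mem_filter.1 hP).2; omega
  calc _ = #((noSingletons s k).sigma fun Q => Q.parts) := by
        refine card_bij' (fun P hP => ⟨P.eraseFromPart ha (h2 P hP), (P.part a).erase a⟩)
          (fun x hx => x.1.insertIntoPart ha (mem_sigma.1 hx).2) (fun P hP => ?_)
          (fun ⟨Q, b⟩ hQb => ?_) (fun P hP => insertIntoPart_eraseFromPart P ha (h2 P hP) _)
          (fun ⟨Q, b⟩ hQb => ?_)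
        · obtain ⟨hP, h3⟩ := mem_filter.1 hP
          exact mem_sigma.2 ⟨eraseFromPart_mem_noSingletons ha hP h3, mem_insert_self _ _⟩
        · obtain ⟨hQ, hb⟩ := mem_sigma.1 hQb
          refine mem_filter.2 ⟨insertIntoPart_mem_noSingletons ha hQ hb, ?_⟩
          rw [card_part_insertIntoPart]
          exact Nat.succ_le_succ ((mem_noSingletons.1 hQ).2 b hb)
        · obtain ⟨-, hb⟩ := mem_sigma.1 hQb
          refine Sigma.ext (eraseFromPart_insertIntoPart Q ha hb ?_) (heq_of_eq ?_)
          · rw [card_part_insertIntoPart]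
            exact Nat.succ_le_succ (card_pos.2 (Q.nonempty_of_mem_parts hb))
          · rw [part_insertIntoPart, erase_insert fun h => ha (Q.subset hb h)]
    _ = k * #(noSingletons s k) := by
        rw [card_sigma, sum_const_nat fun Q hQ => (mem_noSingletons.1 hQ).1, mul_comm]

theorem card_filter_part_eq_pair (ha : a ∉ s) (hj : j ∈ s) :
    #{P ∈ noSingletons (insert a s) (k + 1) | P.part a = {a, j}} =
      #(noSingletons (s.erase j) k) :=
  card_bij' (fun P hP => P.erasePairPart ha (mem_filter.1 hP).2)
    (fun Q _ => Q.insertPairPart ha hj)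
    (fun _ hP => erasePairPart_mem_noSingletons ha (mem_filter.1 hP).1 _)
    (fun Q hQ => mem_filter.2
      ⟨insertPairPart_mem_noSingletons ha hj hQ, part_insertPairPart Q ha hj⟩)
    (fun P _ => insertPairPart_erasePairPart P ha hj _)
    (fun Q _ => erasePairPart_insertPairPart Q ha hj _)

theorem card_filter_card_part_eq_two (ha : a ∉ s) :
    #{P ∈ noSingletons (insert a s) (k + 1) | #(P.part a) = 2} =
      ∑ j ∈ s, #(noSingletons (s.erase j) k) := by
  rw [← sum_congr rfl fun j hj => card_filter_part_eq_pair ha hj, ← card_biUnion]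
  · congr 1
    ext P
    simp only [mem_filter, mem_biUnion, card_eq_two_iff_exists_eq_pair ha (P.part_subset a)
      (P.mem_part_self.2 (mem_insert_self a s))]
    tauto
  · intro j hj j' _ hjj'
    simp only [Function.onFun, disjoint_left, mem_filter]
    rintro P ⟨-, hP⟩ ⟨-, hP'⟩
    have hjP : j ∈ P.part a := by simp [hP]
    rw [hP', mem_insert, mem_singleton] at hjP
    exact hjj' (hjP.resolve_left (hj.ne_of_notMem ha))

theorem card_noSingletons_insert (ha : a ∉ s) :
    #(noSingletons (insert a s) (k + 1)) =
      (k + 1) * #(noSingletons s (k + 1)) + ∑ j ∈ s, #(noSingletons (s.erase j) k) := by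
  rw [← card_filter_add_card_filter_not (fun P : Finpartition _ => #(P.part a) = 2),
    card_filter_card_part_eq_two ha, add_comm, ← card_filter_three_le_card_part ha]
  congr 2
  refine filter_congr fun P hP => ?_
  have := (mem_noSingletons.1 hP).2 _ (P.part_mem.2 (mem_insert_self a s))
  omega

theorem card_noSingletons_empty :
    #(noSingletons (∅ : Finset α) k) = if k = 0 then 1 else 0 := by
  have hparts (P : Finpartition (∅ : Finset α)) : P.parts = ∅ := P.parts_eq_empty_iff.2 rfl
  have : Unique (Finpartition (∅ : Finset α)) :=
    inferInstanceAs (Unique (Finpartition (⊥ : Finset α)))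
  by_cases hk : k = 0 <;> simp [noSingletons, hparts, hk, eq_comm (a := 0)]

theorem noSingletons_zero (hs : s.Nonempty) : noSingletons s 0 = ∅ :=
  filter_false_of_mem fun P _ h => hs.ne_empty (P.parts_eq_empty_iff.1 (card_eq_zero.1 h.1))

theorem card_noSingletons_congr {β : Type*} [DecidableEq β] {t : Finset β} (h : #s = #t) :
    #(noSingletons s k) = #(noSingletons t k) := by
  induction hn : #s using Nat.strong_induction_on generalizing s t k with | _ n ih => ?_
  rcases n with _ | n
  · rw [card_eq_zero.1 hn, card_eq_zero.1 (h.symm.trans hn), card_noSingletons_empty,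
      card_noSingletons_empty]
  obtain ⟨a, s, ha, rfl, hs⟩ := card_eq_succ.1 hn
  obtain ⟨b, t, hb, rfl, ht⟩ := card_eq_succ.1 (h.symm.trans hn)
  rcases k with _ | k
  · rw [noSingletons_zero (insert_nonempty a s), noSingletons_zero (insert_nonempty b t),
      card_empty, card_empty]
  rw [card_noSingletons_insert ha, card_noSingletons_insert hb,
    ih n n.lt_succ_self (hs.trans ht.symm) hs, ← sum_coe_sort s, ← sum_coe_sort t]
  congr 1
  refine Fintype.sum_equiv (s.equivOfCardEq (hs.trans ht.symm)) _ _ fun j => ?_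
  refine ih (n - 1) (by omega) ?_ ?_ <;> simp [card_erase_of_mem, hs, ht]

end Count

end Finpartition

open Finpartition

theorem partD_eq_card (n k : ℕ) : partD n k = #(noSingletons (univ : Finset (Fin n)) k) := by
  rw [partD, Nat.card_eq_fintype_card, Fintype.card_subtype]
  congr 1
  ext P
  simp [noSingletons]

theorem card_noSingletons_eq_partD {α : Type*} [DecidableEq α] (s : Finset α) (k : ℕ) :
    #(noSingletons s k) = partD #s k := by
  rw [partD_eq_card]
  exact card_noSingletons_congr (by simp)

theorem partD_zero_right (n : ℕ) : partD n 0 = if n = 0 then 1 else 0 := by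
  rw [← card_range n, ← card_noSingletons_eq_partD]
  rcases n with _ | n <;> simp [noSingletons_zero, card_noSingletons_empty]

theorem partD_zero_left (k : ℕ) : partD 0 (k + 1) = 0 := by
  simpa [card_noSingletons_empty] using (card_noSingletons_eq_partD (∅ : Finset ℕ) (k + 1)).symm

theorem partD_one (k : ℕ) : partD 1 (k + 1) = 0 := by
  simpa [card_noSingletons_eq_partD, partD_zero_left] using
    card_noSingletons_insert (k := k) (notMem_empty 0 : 0 ∉ (∅ : Finset ℕ))

theorem partD_add_two (n k : ℕ) :
    partD (n + 2) (k + 1) = (k + 1) * partD (n + 1) (k + 1) + (n + 1) * partD n k := by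
  have h := card_noSingletons_insert (k := k) (notMem_range_self : n + 1 ∉ range (n + 1))
  rw [← range_add_one, sum_congr rfl fun j hj => by
    rw [card_noSingletons_eq_partD, card_erase_of_mem hj, card_range, Nat.add_sub_cancel]] at h
  simpa [card_noSingletons_eq_partD] using h

open PowerSeries

theorem partDogf_zero : partDogf 0 = 1 := by
  ext n
  simp [partDogf, partD_zero_right, coeff_one]

theorem one_sub_mul_partDogf_succ (k : ℕ) :
    (1 - ((k + 1 : ℕ) : ℚ⟦X⟧) * X) * partDogf (k + 1) = X ^ 2 * d⁄dX ℚ (X * partDogf k) := by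
  ext n
  rw [← map_natCast (C (R := ℚ)), sub_mul, one_mul, mul_assoc, map_sub, coeff_C_mul,
    coeff_X_pow_mul']
  rcases n with _ | _ | n
  · simp [partDogf, partD_zero_left]
  · simp [partDogf, coeff_succ_X_mul, partD_zero_left, partD_one]
  · rw [if_pos (by omega), show n + 1 + 1 - 2 = n from rfl, coeff_derivative, coeff_succ_X_mul,
      coeff_succ_X_mul]
    simp only [partDogf, coeff_mk, partD_add_two]
    push_cast
    ring

theorem partDogf_succ (k : ℕ) :
    partDogf (k + 1) = X ^ 2 * (1 - ((k + 1 : ℕ) : ℚ⟦X⟧) * X)⁻¹ * d⁄dX ℚ (X * partDogf k) := by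
  rw [mul_right_comm, eq_mul_inv_iff_mul_eq (by simp), mul_comm, one_sub_mul_partDogf_succ]

open PowerSeries in
theorem partDogf_recursion :
    partDogf 1 = X ^ 2 * (1 - X)⁻¹ ∧
    ∀ k : ℕ, 2 ≤ k →
      partDogf k =
        X ^ 2 * (1 - (k : ℚ⟦X⟧) * X)⁻¹ *
          (d⁄dX ℚ (X * partDogf (k - 1))) := by
  refine ⟨by simpa [partDogf_zero] using partDogf_succ 0, fun k hk => ?_⟩
  obtain ⟨k, rfl⟩ := Nat.exists_eq_add_of_le' (by omega : 1 ≤ k)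
  exact partDogf_succ k
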